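/- For every closed term t of λS, either t is a normal form (a value or a stuck term), or there exist a unique redex r and a unique evaluation context F such that t = F[r]. -/

import Mathlib

/-- Terms of the calculus λS: variables, abstractions, applications,
    shift (Sk.t) and reset (⟨t⟩). -/
inductive Tm : Type
  | var : ℕ → Tm
  | lam : ℕ → Tm → Tm
  | app : Tm → Tm → Tm
  | shift : ℕ → Tm → Tm
  | reset : Tm → Tm
deriving DecidableEq

namespace Tm

/-- Values are λ-abstractions. -/
def IsValue : Tm → Prop
  | lam _ _ => True
  | _ => False

/-- Free variables. -/
def fv : Tm → Finset ℕ
  | var x => {x}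
  | lam x t => fv t \ {x}
  | app a b => fv a ∪ fv b
  | shift k t => fv t \ {k}
  | reset t => fv t

def Closed (t : Tm) : Prop := fv t = ∅

/-- Substitution t{v/x} (substituted terms are closed values, so no
    capture can occur). -/
def subst : Tm → ℕ → Tm → Tm
  | var y, x, v => if y = x then v else var y
  | lam y t, x, v => if y = x then lam y t else lam y (subst t x v)
  | app a b, x, v => app (subst a x v) (subst b x v)
  | shift k t, x, v => if k = x then shift k t else shift k (subst t x v)
  | reset t, x, v => reset (subst t x v)

end Tm

/-- (Evaluation) contexts F ::= [] | v F | F t | ⟨F⟩, represented outside-in.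
    Pure contexts E are those with no reset constructor. -/
inductive Ctx : Type
  | hole : Ctx
  | appR : Tm → Ctx → Ctx   -- v F
  | appL : Ctx → Tm → Ctx   -- F t
  | reset : Ctx → Ctx       -- ⟨F⟩
deriving DecidableEq

namespace Ctx

def plug : Ctx → Tm → Tm
  | hole, t => t
  | appR v F, t => Tm.app v (F.plug t)
  | appL F u, t => Tm.app (F.plug t) u
  | reset F, t => Tm.reset (F.plug t)

/-- Well-formedness: in `v F` the term v must be a value. -/
def Wf : Ctx → Prop
  | hole => True
  | appR v F => v.IsValue ∧ F.Wf
  | appL F _ => F.Wf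
  | reset F => F.Wf

/-- Pure contexts contain no reset around the hole. -/
def Pure : Ctx → Prop
  | hole => True
  | appR _ F => F.Pure
  | appL F _ => F.Pure
  | reset _ => False

def fv : Ctx → Finset ℕ
  | hole => ∅
  | appR v F => v.fv ∪ F.fv
  | appL F u => F.fv ∪ u.fv
  | reset F => F.fv

/-- Context composition: (F.comp G)[t] = F[G[t]]. -/
def comp : Ctx → Ctx → Ctx
  | hole, G => G
  | appR v F, G => appR v (F.comp G)
  | appL F u, G => appL (F.comp G) u
  | reset F, G => reset (F.comp G)

end Ctx

/-- A canonical fresh variable not occurring in the finite set s. -/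
def fresh (s : Finset ℕ) : ℕ := s.sup id + 1

/-- The reduction relation →v of λS. -/
inductive Red : Tm → Tm → Prop
  | beta (F : Ctx) (x : ℕ) (t v : Tm) :
      F.Wf → v.IsValue →
      Red (F.plug (Tm.app (Tm.lam x t) v)) (F.plug (t.subst x v))
  | shift (F E : Ctx) (k : ℕ) (t : Tm) :
      F.Wf → E.Wf → E.Pure →
      Red (F.plug (Tm.reset (E.plug (Tm.shift k t))))
          (F.plug (Tm.reset (t.subst k
            (Tm.lam (fresh E.fv) (Tm.reset (E.plug (Tm.var (fresh E.fv))))))))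
  | reset (F : Ctx) (v : Tm) :
      F.Wf → v.IsValue →
      Red (F.plug (Tm.reset v)) (F.plug v)

/-- A term is stuck if it is not a value and admits no reduction step. -/
def Stuck (t : Tm) : Prop := ¬ t.IsValue ∧ ∀ t', ¬ Red t t'

/-- A normal form is a value or a stuck term. -/
def NormalForm (t : Tm) : Prop := t.IsValue ∨ Stuck t

/-- Reflexive-transitive closure of reduction. -/
def Steps : Tm → Tm → Prop := Relation.ReflTransGen Red

/-- Evaluation: t ⇓ t' when t →v* t' and t' is irreducible. -/
def Evals (t t' : Tm) : Prop := Steps t t' ∧ ∀ u, ¬ Red t' u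

/-- Redexes: (λx.t) v, ⟨E[Sk.t]⟩ with E pure, and ⟨v⟩. -/
def IsRedex (r : Tm) : Prop :=
  (∃ x t v, Tm.IsValue v ∧ r = Tm.app (Tm.lam x t) v) ∨
  (∃ E : Ctx, ∃ k t, E.Wf ∧ E.Pure ∧ r = Tm.reset (E.plug (Tm.shift k t))) ∨
  (∃ v, Tm.IsValue v ∧ r = Tm.reset v)

/-- Divergence: an infinite reduction sequence. -/
def Diverges (t : Tm) : Prop := ∃ f : ℕ → Tm, f 0 = t ∧ ∀ n, Red (f n) (f (n + 1))

/-- Ω = (λx.x x)(λx.x x). -/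
def Omega : Tm :=
  Tm.app (Tm.lam 0 (Tm.app (Tm.var 0) (Tm.var 0)))
         (Tm.lam 0 (Tm.app (Tm.var 0) (Tm.var 0)))

/-- Arbitrary one-hole contexts C. -/
inductive GCtx : Type
  | hole : GCtx
  | lam : ℕ → GCtx → GCtx
  | appL : GCtx → Tm → GCtx
  | appR : Tm → GCtx → GCtx
  | shift : ℕ → GCtx → GCtx
  | reset : GCtx → GCtx

def GCtx.plug : GCtx → Tm → Tm
  | hole, t => t
  | lam x C, t => Tm.lam x (C.plug t)
  | appL C u, t => Tm.app (C.plug t) u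
  | appR u C, t => Tm.app u (C.plug t)
  | shift k C, t => Tm.shift k (C.plug t)
  | reset C, t => Tm.reset (C.plug t)

/-- Contextual equivalence for the relaxed semantics. -/
def CtxEquiv (t0 t1 : Tm) : Prop :=
  ∀ C : GCtx, (C.plug t0).Closed → (C.plug t1).Closed →
    ((∃ v, v.IsValue ∧ Evals (C.plug t0) v) ↔ (∃ v, v.IsValue ∧ Evals (C.plug t1) v)) ∧
    ((∃ s, Stuck s ∧ Evals (C.plug t0) s) ↔ (∃ s, Stuck s ∧ Evals (C.plug t1) s))

/-- Contextual equivalence for the original (top-level reset) semantics. -/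
def CtxEquivP (t0 t1 : Tm) : Prop :=
  ∀ C : GCtx, (Tm.reset (C.plug t0)).Closed → (Tm.reset (C.plug t1)).Closed →
    ((∃ v, v.IsValue ∧ Evals (Tm.reset (C.plug t0)) v) ↔
     (∃ v, v.IsValue ∧ Evals (Tm.reset (C.plug t1)) v))

/-- The term-generating closure of a relation R on closed terms. -/
inductive TmClo (R : Tm → Tm → Prop) : Tm → Tm → Prop
  | base {t t'} : R t t' → TmClo R t t'
  | var (x : ℕ) : TmClo R (Tm.var x) (Tm.var x)
  | lam {t t'} (x : ℕ) : TmClo R t t' → TmClo R (Tm.lam x t) (Tm.lam x t')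
  | app {a a' b b'} : TmClo R a a' → TmClo R b b' →
      TmClo R (Tm.app a b) (Tm.app a' b')
  | shift {t t'} (k : ℕ) : TmClo R t t' → TmClo R (Tm.shift k t) (Tm.shift k t')
  | reset {t t'} : TmClo R t t' → TmClo R (Tm.reset t) (Tm.reset t')


/-!
A redex `(λx.t) v`, `⟨v⟩` or `⟨E[Sk.t]⟩` is never of the form `F[r]` with `F` a non-empty
evaluation context: the subterm in evaluation position would then be a value or a shift
under a pure context, and neither contains a redex in evaluation position. So two
decompositions of a term agree, by peeling off their common outermost frames. Existence is
by structural induction: a closed term is a value, a shift under a pure context (which is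
stuck), or decomposes.
-/

def Tm.IsStuckShift (t : Tm) : Prop :=
  ∃ E : Ctx, ∃ k s, E.Wf ∧ E.Pure ∧ t = E.plug (Tm.shift k s)

theorem Tm.IsValue.exists_eq_lam {t : Tm} (h : t.IsValue) : ∃ x s, t = Tm.lam x s := by
  cases t <;> first | exact ⟨_, _, rfl⟩ | exact h.elim

theorem Ctx.isValue_plug {F : Ctx} {t : Tm} (h : (F.plug t).IsValue) :
    F = Ctx.hole ∧ t.IsValue := by
  cases F <;> first | exact ⟨rfl, h⟩ | exact h.elim

theorem Ctx.not_isValue_plug {t : Tm} (ht : ¬ t.IsValue) (F : Ctx) : ¬ (F.plug t).IsValue :=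
  fun h => ht (Ctx.isValue_plug h).2

theorem Ctx.not_isValue_plug_shift (E : Ctx) (k : ℕ) (s : Tm) :
    ¬ (E.plug (Tm.shift k s)).IsValue :=
  Ctx.not_isValue_plug id E

theorem Red.exists_plug_redex {t t' : Tm} (h : Red t t') :
    ∃ (F : Ctx) (r : Tm), F.Wf ∧ IsRedex r ∧ t = F.plug r := by
  cases h with
  | beta F x s v hF hv => exact ⟨F, _, hF, Or.inl ⟨x, s, v, hv, rfl⟩, rfl⟩
  | shift F E k s hF hE hEp =>
    exact ⟨F, _, hF, Or.inr (Or.inl ⟨E, k, s, hE, hEp, rfl⟩), rfl⟩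
  | reset F v hF hv => exact ⟨F, _, hF, Or.inr (Or.inr ⟨v, hv, rfl⟩), rfl⟩

namespace IsRedex

variable {r : Tm}

theorem not_isValue (hr : IsRedex r) : ¬ r.IsValue := by
  rcases hr with ⟨_, _, _, _, rfl⟩ | ⟨_, _, _, _, _, rfl⟩ | ⟨_, _, rfl⟩ <;> exact id

theorem isValue_of_app {a b : Tm} (hr : IsRedex (Tm.app a b)) : a.IsValue ∧ b.IsValue := by
  rcases hr with ⟨_, _, _, hv, h⟩ | ⟨_, _, _, _, _, h⟩ | ⟨_, _, h⟩ <;> cases h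
  exact ⟨trivial, hv⟩

theorem of_reset {u : Tm} (hr : IsRedex (Tm.reset u)) : u.IsValue ∨ u.IsStuckShift := by
  rcases hr with ⟨_, _, _, _, h⟩ | ⟨E, k, s, hE, hEp, h⟩ | ⟨_, hv, h⟩ <;> cases h
  exacts [Or.inr ⟨E, k, s, hE, hEp, rfl⟩, Or.inl hv]

theorem not_shift {k : ℕ} {s : Tm} : ¬ IsRedex (Tm.shift k s) := by
  rintro (⟨_, _, _, _, h⟩ | ⟨_, _, _, _, _, h⟩ | ⟨_, _, h⟩) <;> cases h

end IsRedex

theorem Ctx.plug_shift_ne_plug_redex {E F : Ctx} {k : ℕ} {s r : Tm} (hE : E.Wf)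
    (hEp : E.Pure) (hF : F.Wf) (hr : IsRedex r) : E.plug (Tm.shift k s) ≠ F.plug r := by
  induction E generalizing F with
  | hole =>
    cases F with
    | hole => rintro rfl; exact IsRedex.not_shift hr
    | _ => nofun
  | appR _ E ih =>
    cases F with
    | hole => rintro rfl; exact E.not_isValue_plug_shift k s hr.isValue_of_app.2
    | appR _ G => exact fun h => ih (F := G) hE.2 hEp hF.2 (Tm.app.inj h).2
    | appL G _ => exact fun h => Ctx.not_isValue_plug hr.not_isValue G ((Tm.app.inj h).1 ▸ hE.1)
    | reset => nofun
  | appL E _ ih =>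
    cases F with
    | hole => rintro rfl; exact E.not_isValue_plug_shift k s hr.isValue_of_app.1
    | appR _ G => exact fun h => E.not_isValue_plug_shift k s ((Tm.app.inj h).1 ▸ hF.1)
    | appL G _ => exact fun h => ih (F := G) hE hEp hF (Tm.app.inj h).1
    | reset => nofun
  | reset => exact hEp.elim

theorem Tm.IsStuckShift.stuck {t : Tm} (h : t.IsStuckShift) : Stuck t := by
  obtain ⟨E, k, s, hE, hEp, rfl⟩ := h
  refine ⟨E.not_isValue_plug_shift k s, fun t' hred => ?_⟩
  obtain ⟨F, r, hF, hr, he⟩ := hred.exists_plug_redex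
  exact Ctx.plug_shift_ne_plug_redex hE hEp hF hr he

theorem IsRedex.eq_hole_of_plug_eq {F : Ctx} {r r' : Tm} (hr : IsRedex r) (hF : F.Wf)
    (hr' : IsRedex r') (h : F.plug r' = r) : F = Ctx.hole := by
  subst h
  cases F with
  | hole => rfl
  | appR _ G => exact (Ctx.not_isValue_plug hr'.not_isValue G hr.isValue_of_app.2).elim
  | appL G _ => exact (Ctx.not_isValue_plug hr'.not_isValue G hr.isValue_of_app.1).elim
  | reset G =>
    rcases hr.of_reset with hv | ⟨E, k, s, hE, hEp, he⟩
    · exact (Ctx.not_isValue_plug hr'.not_isValue G hv).elim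
    · exact (Ctx.plug_shift_ne_plug_redex (F := G) hE hEp hF hr' he.symm).elim

theorem Ctx.plug_redex_inj {F F' : Ctx} {r r' : Tm} (hF : F.Wf) (hF' : F'.Wf)
    (hr : IsRedex r) (hr' : IsRedex r') (h : F.plug r = F'.plug r') : F = F' ∧ r = r' := by
  induction F generalizing F' with
  | hole => obtain rfl := hr.eq_hole_of_plug_eq hF' hr' h.symm; exact ⟨rfl, h⟩
  | appR _ G ih =>
    cases F' with
    | hole => nomatch hr'.eq_hole_of_plug_eq hF hr h
    | appR _ G' =>
      obtain ⟨rfl, hplug⟩ := Tm.app.inj h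
      obtain ⟨rfl, rfl⟩ := ih (F' := G') hF.2 hF'.2 hplug
      exact ⟨rfl, rfl⟩
    | appL G' _ => exact (Ctx.not_isValue_plug hr'.not_isValue G' ((Tm.app.inj h).1 ▸ hF.1)).elim
    | reset => nomatch h
  | appL G _ ih =>
    cases F' with
    | hole => nomatch hr'.eq_hole_of_plug_eq hF hr h
    | appR _ G' => exact (Ctx.not_isValue_plug hr.not_isValue G ((Tm.app.inj h).1 ▸ hF'.1)).elim
    | appL G' _ =>
      obtain ⟨hplug, rfl⟩ := Tm.app.inj h
      obtain ⟨rfl, rfl⟩ := ih (F' := G') hF hF' hplug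
      exact ⟨rfl, rfl⟩
    | reset => nomatch h
  | reset G ih =>
    cases F' with
    | hole => nomatch hr'.eq_hole_of_plug_eq hF hr h
    | reset G' =>
      obtain ⟨rfl, rfl⟩ := ih (F' := G') hF hF' (Tm.reset.inj h)
      exact ⟨rfl, rfl⟩
    | _ => nomatch h

theorem Tm.Closed.isValue_or_isStuckShift_or_exists_plug_redex {t : Tm} (ht : t.Closed) :
    t.IsValue ∨ t.IsStuckShift ∨
      ∃ (F : Ctx) (r : Tm), F.Wf ∧ IsRedex r ∧ t = F.plug r := by
  induction t with
  | var => simp [Tm.Closed, Tm.fv] at ht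
  | lam => exact Or.inl trivial
  | shift k s => exact Or.inr (Or.inl ⟨.hole, k, s, trivial, trivial, rfl⟩)
  | app a b iha ihb =>
    obtain ⟨ha, hb⟩ := Finset.union_eq_empty.mp ht
    rcases iha ha with hav | ⟨E, k, s, hE, hEp, rfl⟩ | ⟨F, r, hF, hr, rfl⟩
    · obtain ⟨x, body, rfl⟩ := hav.exists_eq_lam
      rcases ihb hb with hbv | ⟨E, k, s, hE, hEp, rfl⟩ | ⟨F, r, hF, hr, rfl⟩
      · exact Or.inr (Or.inr ⟨.hole, _, trivial, Or.inl ⟨x, body, b, hbv, rfl⟩, rfl⟩)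
      · exact Or.inr (Or.inl ⟨.appR (.lam x body) E, k, s, ⟨trivial, hE⟩, hEp, rfl⟩)
      · exact Or.inr (Or.inr ⟨.appR (.lam x body) F, r, ⟨trivial, hF⟩, hr, rfl⟩)
    · exact Or.inr (Or.inl ⟨.appL E b, k, s, hE, hEp, rfl⟩)
    · exact Or.inr (Or.inr ⟨.appL F b, r, hF, hr, rfl⟩)
  | reset u ih =>
    rcases ih ht with hv | ⟨E, k, s, hE, hEp, rfl⟩ | ⟨F, r, hF, hr, rfl⟩
    · exact Or.inr (Or.inr ⟨.hole, _, trivial, Or.inr (Or.inr ⟨u, hv, rfl⟩), rfl⟩)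
    · exact Or.inr (Or.inr
        ⟨.hole, _, trivial, Or.inr (Or.inl ⟨E, k, s, hE, hEp, rfl⟩), rfl⟩)
    · exact Or.inr (Or.inr ⟨.reset F, r, hF, hr, rfl⟩)

/-- unique decomposition of closed terms. -/
theorem unique_decomposition (t : Tm) (ht : t.Closed) :
    NormalForm t ∨
      ∃! p : Ctx × Tm, p.1.Wf ∧ IsRedex p.2 ∧ t = p.1.plug p.2 := by
  rcases ht.isValue_or_isStuckShift_or_exists_plug_redex with hv | hs | ⟨F, r, hF, hr, rfl⟩
  · exact Or.inl (Or.inl hv)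
  · exact Or.inl (Or.inr hs.stuck)
  · refine Or.inr ⟨(F, r), ⟨hF, hr, rfl⟩, ?_⟩
    rintro ⟨F', r'⟩ ⟨hF', hr', h⟩
    obtain ⟨rfl, rfl⟩ := Ctx.plug_redex_inj hF' hF hr' hr h.symm
    rfl
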